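/- If a language L ⊆ (Σ×{0,1})^ω is recognized by a deterministic max-automaton, then UL is recognized by a deterministic guarded max-automaton. -/

import Mathlib

namespace MaxReg

/-! ### Counter operations and boolean combinations -/

inductive CounterOp (C : Type) where
  | inc (c : C)
  | reset (c : C)
  | output (c : C)
  | maxOp (c d : C)

def applyOp {C : Type} [DecidableEq C] (v : C → ℕ) :
    CounterOp C → (C → ℕ) × Option (C × ℕ)
  | .inc c => (Function.update v c (v c + 1), none)
  | .reset c => (Function.update v c 0, none)
  | .output c => (v, some (c, v c))
  | .maxOp c d => (Function.update v c (max (v c) (v d)), none)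

def applyOps {C : Type} [DecidableEq C] :
    List (CounterOp C) → (C → ℕ) → (C → ℕ) × List (C × ℕ)
  | [], v => (v, [])
  | op :: ops, v =>
      let p := applyOp v op
      let r := applyOps ops p.1
      (r.1, p.2.toList ++ r.2)

/-- Boolean combinations with atoms in `σ` (used for acceptance conditions:
the atom `c` stands for "the sequence of values output on counter `c` is bounded"). -/
inductive BC (σ : Type) where
  | tt
  | atom (a : σ)
  | nt (φ : BC σ)
  | an (φ ψ : BC σ)

def BC.eval {σ : Type} (f : σ → Prop) : BC σ → Prop
  | .tt => True
  | .atom a => f a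
  | .nt φ => ¬ φ.eval f
  | .an φ ψ => φ.eval f ∧ ψ.eval f

/-! ### Deterministic max-automata -/

structure MaxAutomaton (α : Type) where
  Q : Type
  C : Type
  [finQ : Fintype Q]
  [finC : Fintype C]
  [decC : DecidableEq C]
  init : Q
  δ : Q → α → Q × List (CounterOp C)
  acc : BC C

attribute [instance] MaxAutomaton.finQ MaxAutomaton.finC MaxAutomaton.decC

namespace MaxAutomaton

variable {α : Type} (A : MaxAutomaton α)

/-- The state at position `n` of the unique run on `w`, started in state `q`
(at position `0`). -/
def runFrom (q : A.Q) (w : ℕ → α) : ℕ → A.Q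
  | 0 => q
  | n + 1 => (A.δ (runFrom q w n) (w n)).1

/-- Counter values before reading the letter at position `n` (all counters start at `0`). -/
def valsFrom (q : A.Q) (w : ℕ → α) : ℕ → (A.C → ℕ)
  | 0 => fun _ => 0
  | n + 1 => (applyOps (A.δ (A.runFrom q w n) (w n)).2 (valsFrom q w n)).1

/-- The (counter, value) pairs output while reading the letter at position `n`. -/
def outsFrom (q : A.Q) (w : ℕ → α) (n : ℕ) : List (A.C × ℕ) :=
  (applyOps (A.δ (A.runFrom q w n) (w n)).2 (A.valsFrom q w n)).2

/-- "The sequence `ρ_c` of values output on counter `c` is bounded." -/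
def BoundedFrom (q : A.Q) (w : ℕ → α) (c : A.C) : Prop :=
  ∃ B, ∀ n, ∀ p ∈ A.outsFrom q w n, p.1 = c → p.2 ≤ B

def AcceptsFrom (q : A.Q) (w : ℕ → α) : Prop :=
  A.acc.eval (A.BoundedFrom q w)

def Accepts (w : ℕ → α) : Prop := A.AcceptsFrom A.init w

def Lang : Set (ℕ → α) := { w | A.Accepts w }

/-- One step on a configuration (state, counter valuation), for reading finite words. -/
def stepList (p : A.Q × (A.C → ℕ)) (a : α) : A.Q × (A.C → ℕ) :=
  ((A.δ p.1 a).1, (applyOps (A.δ p.1 a).2 p.2).1)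

/-- Configuration (state, counter valuation) reached after reading a finite word
from the initial state with all counters `0`. -/
def readConfig (l : List α) : A.Q × (A.C → ℕ) :=
  l.foldl A.stepList (A.init, fun _ => 0)

end MaxAutomaton

/-! ### Annotating words with sets -/

/-- `w[X]` : extend each letter of `w` with the bit `1` exactly at the positions in `X`. -/
def withSet {α : Type} (w : ℕ → α) (X : Finset ℕ) : ℕ → α × Bool :=
  fun n => (w n, decide (n ∈ X))

/-- `w[X₁,…,Xₙ]` : extend each letter of `w` with a bit vector. -/
def withSets {α : Type} {n : ℕ} (w : ℕ → α) (Xs : Fin n → Finset ℕ) :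
    ℕ → α × (Fin n → Bool) :=
  fun m => (w m, fun i => decide (m ∈ Xs i))

/-- Annotate a finite word with a set of positions. -/
def encodeList {α : Type} (l : List α) (X : Finset ℕ) : List (α × Bool) :=
  l.zipIdx.map (fun p => (p.1, decide (p.2 ∈ X)))

/-- `UL` : the words `w` such that `w[X] ∈ L` for arbitrarily large finite sets `X`. -/
def UL {α : Type} (L : Set (ℕ → α × Bool)) : Set (ℕ → α) :=
  { w | ∀ n : ℕ, ∃ X : Finset ℕ, n ≤ X.card ∧ withSet w X ∈ L }

/-- `max(q, l)` : maximal cardinality of a set `X` of positions of `l` such that `A`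
reaches state `q` after reading `l[X]` (and `0` if there is no such set). -/
noncomputable def maxReach {α : Type} (A : MaxAutomaton (α × Bool)) (q : A.Q)
    (l : List α) : ℕ :=
  sSup { k | ∃ X : Finset ℕ, (∀ x ∈ X, x < l.length) ∧ X.card = k ∧
    (A.readConfig (encodeList l X)).1 = q }

def suffixFrom {α : Type} (w : ℕ → α) (n : ℕ) : ℕ → α := fun k => w (n + k)

def prefixList {α : Type} (w : ℕ → α) (n : ℕ) : List α := (List.range n).map w

/-! ### WMSO+U and MSO+U formulas -/

inductive Formula (α : Type) where
  | letter (a : α) (x : ℕ)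
  | mem (x X : ℕ)
  | le (x y : ℕ)
  | not (φ : Formula α)
  | and (φ ψ : Formula α)
  | exFO (x : ℕ) (φ : Formula α)
  | exSO (X : ℕ) (φ : Formula α)
  | U (X : ℕ) (φ : Formula α)

/-- Weak semantics: set variables range over finite sets of positions. -/
def Sat {α : Type} (w : ℕ → α) (v1 : ℕ → ℕ) (v2 : ℕ → Finset ℕ) :
    Formula α → Prop
  | .letter a x => w (v1 x) = a
  | .mem x X => v1 x ∈ v2 X
  | .le x y => v1 x ≤ v1 y
  | .not φ => ¬ Sat w v1 v2 φ
  | .and φ ψ => Sat w v1 v2 φ ∧ Sat w v1 v2 ψ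
  | .exFO x φ => ∃ k : ℕ, Sat w (Function.update v1 x k) v2 φ
  | .exSO X φ => ∃ S : Finset ℕ, Sat w v1 (Function.update v2 X S) φ
  | .U X φ => ∀ n : ℕ, ∃ S : Finset ℕ, n ≤ S.card ∧
      Sat w v1 (Function.update v2 X S) φ

/-- Full semantics: set variables range over arbitrary subsets of ℕ; the
unbounding quantifier still speaks about finite sets. -/
def SatFull {α : Type} (w : ℕ → α) (v1 : ℕ → ℕ) (v2 : ℕ → Set ℕ) :
    Formula α → Prop
  | .letter a x => w (v1 x) = a
  | .mem x X => v1 x ∈ v2 X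
  | .le x y => v1 x ≤ v1 y
  | .not φ => ¬ SatFull w v1 v2 φ
  | .and φ ψ => SatFull w v1 v2 φ ∧ SatFull w v1 v2 ψ
  | .exFO x φ => ∃ k : ℕ, SatFull w (Function.update v1 x k) v2 φ
  | .exSO X φ => ∃ S : Set ℕ, SatFull w v1 (Function.update v2 X S) φ
  | .U X φ => ∀ n : ℕ, ∃ S : Finset ℕ, n ≤ S.card ∧
      SatFull w v1 (Function.update v2 X (↑S : Set ℕ)) φ

def freeFO {α : Type} : Formula α → Finset ℕ
  | .letter _ x => {x}
  | .mem x _ => {x}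
  | .le x y => {x, y}
  | .not φ => freeFO φ
  | .and φ ψ => freeFO φ ∪ freeFO ψ
  | .exFO x φ => freeFO φ \ {x}
  | .exSO _ φ => freeFO φ
  | .U _ φ => freeFO φ

def freeSO {α : Type} : Formula α → Finset ℕ
  | .letter _ _ => ∅
  | .mem _ X => {X}
  | .le _ _ => ∅
  | .not φ => freeSO φ
  | .and φ ψ => freeSO φ ∪ freeSO ψ
  | .exFO _ φ => freeSO φ
  | .exSO X φ => freeSO φ \ {X}
  | .U X φ => freeSO φ \ {X}

def Sentence {α : Type} (φ : Formula α) : Prop :=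
  freeFO φ = ∅ ∧ freeSO φ = ∅

/-- `L` is definable by a sentence of WMSO+U. -/
def DefinableW {α : Type} (L : Set (ℕ → α)) : Prop :=
  ∃ φ : Formula α, Sentence φ ∧
    L = { w | Sat w (fun _ => 0) (fun _ => (∅ : Finset ℕ)) φ }

/-- `L` is definable by a sentence of full MSO+U. -/
def DefinableF {α : Type} (L : Set (ℕ → α)) : Prop :=
  ∃ φ : Formula α, Sentence φ ∧
    L = { w | SatFull w (fun _ => 0) (fun _ => (∅ : Set ℕ)) φ }

/-- `φ` contains no occurrence of the unbounding quantifier. -/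
def UFree {α : Type} : Formula α → Prop
  | .letter _ _ => True
  | .mem _ _ => True
  | .le _ _ => True
  | .not φ => UFree φ
  | .and φ ψ => UFree φ ∧ UFree ψ
  | .exFO _ φ => UFree φ
  | .exSO _ φ => UFree φ
  | .U _ _ => False

/-- Boolean combinations of formulas `U X. φ` with `φ` free of the unbounding
quantifier. -/
inductive IsUNormal {α : Type} : Formula α → Prop
  | base (X : ℕ) (φ : Formula α) : UFree φ → IsUNormal (.U X φ)
  | not {φ : Formula α} : IsUNormal φ → IsUNormal (.not φ)
  | and {φ ψ : Formula α} : IsUNormal φ → IsUNormal ψ →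
      IsUNormal (.and φ ψ)

/-! ### Deterministic Muller automata -/

structure MullerAutomaton (α : Type) where
  Q : Type
  [finQ : Fintype Q]
  init : Q
  δ : Q → α → Q
  F : Set (Set Q)

attribute [instance] MullerAutomaton.finQ

namespace MullerAutomaton

variable {α : Type} (M : MullerAutomaton α)

def run (w : ℕ → α) : ℕ → M.Q
  | 0 => M.init
  | n + 1 => M.δ (run w n) (w n)

/-- States occurring infinitely often in the run on `w`. -/
def InfOcc (w : ℕ → α) : Set M.Q :=
  { q | ∀ n : ℕ, ∃ m, n ≤ m ∧ M.run w m = q }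

def Lang : Set (ℕ → α) := { w | M.InfOcc w ∈ M.F }

end MullerAutomaton

/-! ### Partial runs, convergence, spanning sets -/

section PartialRuns

variable {Q α : Type}

/-- State at position `n + k` of the run seeded at configuration `(q, n)`. -/
def runSeed (δ : Q → α → Q) (w : ℕ → α) (q : Q) (n : ℕ) : ℕ → Q
  | 0 => q
  | k + 1 => δ (runSeed δ w q n k) (w (n + k))

/-- The partial run seeded at configuration `(q, n)`. -/
def seeded (δ : Q → α → Q) (w : ℕ → α) (q : Q) (n : ℕ) : ℕ → Option Q :=
  fun m => if _h : n ≤ m then some (runSeed δ w q n (m - n)) else none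

/-- A partial run over `w`: either the nowhere-defined run or a seeded run. -/
def IsPartialRun (δ : Q → α → Q) (w : ℕ → α) (ρ : ℕ → Option Q) : Prop :=
  ρ = (fun _ => none) ∨ ∃ q n, ρ = seeded δ w q n

/-- Two partial runs converge if they agree from some position on. -/
def Converge (ρ₁ ρ₂ : ℕ → Option Q) : Prop :=
  ∃ N : ℕ, ∀ m, N ≤ m → ρ₁ m = ρ₂ m

/-- A set of partial runs spans `w` if every partial run over `w` converges with
some member of the set. -/
def Spans (δ : Q → α → Q) (w : ℕ → α) (S : Set (ℕ → Option Q)) : Prop :=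
  ∀ ρ, IsPartialRun δ w ρ → ∃ ρ' ∈ S, Converge ρ ρ'

end PartialRuns

/-! ### Deterministic letter-to-letter transducers -/

structure Transducer (α β : Type) where
  Q : Type
  [finQ : Fintype Q]
  init : Q
  δ : Q → α → Q
  out : Q → α → β

attribute [instance] Transducer.finQ

namespace Transducer

variable {α β : Type} (T : Transducer α β)

def run (w : ℕ → α) : ℕ → T.Q
  | 0 => T.init
  | n + 1 => T.δ (run w n) (w n)

/-- The function `Σ^ω → Γ^ω` computed by the transducer. -/
def f (w : ℕ → α) : ℕ → β := fun n => T.out (T.run w n) (w n)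

end Transducer

open Classical in
/-- Decode a word over `Q × {0,1}` as a partial run: position `m` is defined (with the
state recorded at `m`) iff all markers from position `m` on are `1`. -/
noncomputable def decode {Q : Type} (u : ℕ → Q × Bool) : ℕ → Option Q :=
  fun m => if (∀ j, m ≤ j → (u j).2 = true) then some (u m).1 else none

/-! ### Guarded max-automata -/

inductive GOp (C α : Type) where
  | inc (c : C)
  | reset (c : C)
  | output (c : C)
  | maxOp (c d : C)
  /-- `if G then output c` : output the value of `c` only if the suffix of the input
  beginning at the next position belongs to `G`. -/
  | goutput (G : Set (ℕ → α)) (c : C)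

open Classical in
noncomputable def applyGOp {C α : Type} [DecidableEq C] (suffix : ℕ → α)
    (v : C → ℕ) : GOp C α → (C → ℕ) × Option (C × ℕ)
  | .inc c => (Function.update v c (v c + 1), none)
  | .reset c => (Function.update v c 0, none)
  | .output c => (v, some (c, v c))
  | .maxOp c d => (Function.update v c (max (v c) (v d)), none)
  | .goutput G c => (v, if suffix ∈ G then some (c, v c) else none)

noncomputable def applyGOps {C α : Type} [DecidableEq C] (suffix : ℕ → α) :
    List (GOp C α) → (C → ℕ) → (C → ℕ) × List (C × ℕ)
  | [], v => (v, [])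
  | op :: ops, v =>
      let p := applyGOp suffix v op
      let r := applyGOps suffix ops p.1
      (r.1, p.2.toList ++ r.2)

def GOp.WF {C α : Type} : GOp C α → Prop
  | .goutput G _ => ∃ A : MaxAutomaton α, A.Lang = G
  | _ => True

structure GuardedMaxAutomaton (α : Type) where
  Q : Type
  C : Type
  [finQ : Fintype Q]
  [finC : Fintype C]
  [decC : DecidableEq C]
  init : Q
  δ : Q → α → Q × List (GOp C α)
  acc : BC C

attribute [instance] GuardedMaxAutomaton.finQ GuardedMaxAutomaton.finC
  GuardedMaxAutomaton.decC

namespace GuardedMaxAutomaton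

variable {α : Type} (B : GuardedMaxAutomaton α)

/-- All guards used by the automaton are languages recognized by deterministic
max-automata. -/
def WF : Prop := ∀ q a, ∀ op ∈ (B.δ q a).2, op.WF

def run (w : ℕ → α) : ℕ → B.Q
  | 0 => B.init
  | n + 1 => (B.δ (run w n) (w n)).1

noncomputable def vals (w : ℕ → α) : ℕ → (B.C → ℕ)
  | 0 => fun _ => 0
  | n + 1 =>
      (applyGOps (suffixFrom w (n + 1)) (B.δ (B.run w n) (w n)).2 (vals w n)).1

noncomputable def outs (w : ℕ → α) (n : ℕ) : List (B.C × ℕ) :=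
  (applyGOps (suffixFrom w (n + 1)) (B.δ (B.run w n) (w n)).2 (B.vals w n)).2

def Bounded (w : ℕ → α) (c : B.C) : Prop :=
  ∃ Bd, ∀ n, ∀ p ∈ B.outs w n, p.1 = c → p.2 ≤ Bd

def Accepts (w : ℕ → α) : Prop := B.acc.eval (B.Bounded w)

def Lang : Set (ℕ → α) := { w | B.Accepts w }

end GuardedMaxAutomaton

/-! ### Nondeterministic max-automata -/

structure NMaxAutomaton (α : Type) where
  Q : Type
  C : Type
  [finQ : Fintype Q]
  [finC : Fintype C]
  [decC : DecidableEq C]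
  init : Q
  δ : Q → α → Set (Q × List (CounterOp C))
  acc : BC C

attribute [instance] NMaxAutomaton.finQ NMaxAutomaton.finC NMaxAutomaton.decC

/-- Counter values along a sequence of counter-operation lists. -/
def nvals {C : Type} [DecidableEq C] (ops : ℕ → List (CounterOp C)) :
    ℕ → (C → ℕ)
  | 0 => fun _ => 0
  | n + 1 => (applyOps (ops n) (nvals ops n)).1

def nouts {C : Type} [DecidableEq C] (ops : ℕ → List (CounterOp C)) (n : ℕ) :
    List (C × ℕ) :=
  (applyOps (ops n) (nvals ops n)).2

namespace NMaxAutomaton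

variable {α : Type} (A : NMaxAutomaton α)

def Accepts (w : ℕ → α) : Prop :=
  ∃ (q : ℕ → A.Q) (ops : ℕ → List (CounterOp A.C)),
    q 0 = A.init ∧
    (∀ n, (q (n + 1), ops n) ∈ A.δ (q n) (w n)) ∧
    A.acc.eval (fun c => ∃ B, ∀ n, ∀ p ∈ nouts ops n, p.1 = c → p.2 ≤ B)

def Lang : Set (ℕ → α) := { w | A.Accepts w }

end NMaxAutomaton

/-! ### The separating language -/

/-- Position of the `k`-th letter `b` in `a^{ns 0} b a^{ns 1} b ⋯` (0-indexed). -/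
def bpos (ns : ℕ → ℕ) (k : ℕ) : ℕ := (∑ i ∈ Finset.range (k + 1), ns i) + k

/-- `L_sep` over the alphabet `{a, b}` (with `a = false`, `b = true`): words
`a^{n₁} b a^{n₂} b ⋯` such that some number appears infinitely often in `n₁, n₂, …`. -/
def Lsep : Set (ℕ → Bool) :=
  { w | ∃ ns : ℕ → ℕ,
      (∀ m, w m = true ↔ ∃ k, bpos ns k = m) ∧
      ∃ v, { i | ns i = v }.Infinite }

/-! ### Topological notions -/

/-- A `Σ₂` set: a countable union of closed sets. -/
def IsSigma2 {X : Type} [TopologicalSpace X] (S : Set X) : Prop :=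
  ∃ F : ℕ → Set X, (∀ n, IsClosed (F n)) ∧ S = ⋃ n, F n

/-- Boolean combinations of `Σ₂` sets. -/
inductive IsBoolCombSigma2 {X : Type} [TopologicalSpace X] : Set X → Prop
  | base {S : Set X} : IsSigma2 S → IsBoolCombSigma2 S
  | compl {S : Set X} : IsBoolCombSigma2 S → IsBoolCombSigma2 Sᶜ
  | inter {S T : Set X} : IsBoolCombSigma2 S → IsBoolCombSigma2 T →
      IsBoolCombSigma2 (S ∩ T)


/-!
The guarded automaton runs the subset construction of `A` over all the words `w[X]` at once,
and for each state `q` keeps in a counter the largest `|X|` that leads `A` into `q`; along a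
transition of `A` on bit `b` this value is carried over by a maximum, plus `b`.

Acceptance of a max-automaton is a tail property of its run: restarting at position `N` changes
every counter by at most the largest value present at `N`, and finitely many outputs come
before `N`. Hence if all elements of `X` are below `N`, then `w[X]` is accepted iff `A` accepts
the suffix of `w` from `N`, with every bit `0`, from the state reached at `N`. That is a guard
recognized by a max-automaton, so outputting the counter of `q` under it gives output sequences
of which some are unbounded exactly when `w ∈ UL`.
-/

namespace MaxAutomaton

variable {β : Type} (A : MaxAutomaton β)

def valsAt (q : A.Q) (v₀ : A.C → ℕ) (u : ℕ → β) : ℕ → A.C → ℕ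
  | 0 => v₀
  | n + 1 => (applyOps (A.δ (A.runFrom q u n) (u n)).2 (valsAt q v₀ u n)).1

def outsAt (q : A.Q) (v₀ : A.C → ℕ) (u : ℕ → β) (n : ℕ) : List (A.C × ℕ) :=
  (applyOps (A.δ (A.runFrom q u n) (u n)).2 (A.valsAt q v₀ u n)).2

def BoundedAt (q : A.Q) (v₀ : A.C → ℕ) (u : ℕ → β) (c : A.C) : Prop :=
  ∃ B, ∀ n, ∀ p ∈ A.outsAt q v₀ u n, p.1 = c → p.2 ≤ B

theorem valsFrom_eq_valsAt (q : A.Q) (u : ℕ → β) :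
    A.valsFrom q u = A.valsAt q (fun _ => 0) u := by
  funext n
  induction n with
  | zero => rfl
  | succ n ih => simp only [valsFrom, valsAt, ih]

theorem boundedFrom_iff_boundedAt (q : A.Q) (u : ℕ → β) (c : A.C) :
    A.BoundedFrom q u c ↔ A.BoundedAt q (fun _ => 0) u c := by
  simp only [BoundedFrom, BoundedAt, outsFrom, outsAt, valsFrom_eq_valsAt]

theorem runFrom_congr (q : A.Q) {u u' : ℕ → β} {n : ℕ} (h : ∀ k < n, u k = u' k) :
    A.runFrom q u n = A.runFrom q u' n := by
  induction n with
  | zero => rfl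
  | succ n ih => simp only [runFrom, ih fun k hk => h k (Nat.lt_succ_of_lt hk), h n n.lt_succ_self]

theorem runFrom_add (q : A.Q) (u : ℕ → β) (N k : ℕ) :
    A.runFrom q u (N + k) = A.runFrom (A.runFrom q u N) (suffixFrom u N) k := by
  induction k with
  | zero => rfl
  | succ k ih =>
    show A.runFrom q u (N + k + 1) = _
    simp only [runFrom, ih]; rfl

theorem valsAt_add (q : A.Q) (v₀ : A.C → ℕ) (u : ℕ → β) (N k : ℕ) :
    A.valsAt q v₀ u (N + k) =
      A.valsAt (A.runFrom q u N) (A.valsAt q v₀ u N) (suffixFrom u N) k := by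
  induction k with
  | zero => rfl
  | succ k ih =>
    show A.valsAt q v₀ u (N + k + 1) = _
    simp only [valsAt, ih, runFrom_add]; rfl

theorem outsAt_add (q : A.Q) (v₀ : A.C → ℕ) (u : ℕ → β) (N k : ℕ) :
    A.outsAt q v₀ u (N + k) =
      A.outsAt (A.runFrom q u N) (A.valsAt q v₀ u N) (suffixFrom u N) k := by
  simp only [outsAt, valsAt_add, runFrom_add]; rfl

end MaxAutomaton

section Domination

variable {C : Type} [DecidableEq C] {M : ℕ} {v v' : C → ℕ}

theorem applyOp_fst_le (h : ∀ c, v c ≤ v' c + M) (op : CounterOp C) (c : C) :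
    (applyOp v op).1 c ≤ (applyOp v' op).1 c + M := by
  cases op with
  | output d => exact h c
  | inc d =>
    by_cases hc : c = d
    · subst hc
      have := h c
      simp only [applyOp, Function.update_self]
      omega
    · simpa [applyOp, hc] using h c
  | reset d =>
    by_cases hc : c = d
    · subst hc; simp [applyOp]
    · simpa [applyOp, hc] using h c
  | maxOp d e =>
    by_cases hc : c = d
    · subst hc
      simp only [applyOp, Function.update_self]
      rw [← max_add_add_right]
      exact max_le_max (h c) (h e)
    · simpa [applyOp, hc] using h c

theorem applyOp_snd_le (h : ∀ c, v c ≤ v' c + M) (op : CounterOp C) :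
    ∀ p ∈ (applyOp v op).2, ∃ p' ∈ (applyOp v' op).2, p'.1 = p.1 ∧ p.2 ≤ p'.2 + M := by
  cases op <;> simp [applyOp, h]

theorem applyOps_le (ops : List (CounterOp C)) (h : ∀ c, v c ≤ v' c + M) :
    (∀ c, (applyOps ops v).1 c ≤ (applyOps ops v').1 c + M) ∧
      ∀ p ∈ (applyOps ops v).2,
        ∃ p' ∈ (applyOps ops v').2, p'.1 = p.1 ∧ p.2 ≤ p'.2 + M := by
  induction ops generalizing v v' with
  | nil => exact ⟨h, by simp [applyOps]⟩
  | cons op ops ih =>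
    obtain ⟨hvals, houts⟩ := ih (applyOp_fst_le h op)
    refine ⟨hvals, fun p hp => ?_⟩
    simp only [applyOps, List.mem_append, Option.mem_toList] at hp ⊢
    rcases hp with hp | hp
    · obtain ⟨p', hp', hp'p⟩ := applyOp_snd_le h op p hp
      exact ⟨p', Or.inl hp', hp'p⟩
    · obtain ⟨p', hp', hp'p⟩ := houts p hp
      exact ⟨p', Or.inr hp', hp'p⟩

end Domination

namespace MaxAutomaton

variable {β : Type} (A : MaxAutomaton β)

theorem BoundedAt.of_le {q : A.Q} {v v' : A.C → ℕ} {u : ℕ → β} {c : A.C} {M : ℕ}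
    (h : ∀ c, v c ≤ v' c + M) (hb : A.BoundedAt q v' u c) : A.BoundedAt q v u c := by
  have hvals : ∀ n c, A.valsAt q v u n c ≤ A.valsAt q v' u n c + M := by
    intro n
    induction n with
    | zero => exact h
    | succ n ih => exact (applyOps_le _ ih).1
  obtain ⟨B, hB⟩ := hb
  refine ⟨B + M, fun n p hp hpc => ?_⟩
  obtain ⟨p', hp', hp'c, hpp'⟩ := (applyOps_le _ (hvals n)).2 p hp
  have := hB n p' hp' (hp'c.trans hpc)
  omega

theorem boundedAt_iff (q : A.Q) (v v' : A.C → ℕ) (u : ℕ → β) (c : A.C) :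
    A.BoundedAt q v u c ↔ A.BoundedAt q v' u c :=
  have le_sup (v v' : A.C → ℕ) (c : A.C) : v c ≤ v' c + Finset.univ.sup v :=
    le_add_left (Finset.le_sup (Finset.mem_univ c))
  ⟨BoundedAt.of_le A (le_sup v' v), BoundedAt.of_le A (le_sup v v')⟩

theorem exists_bound_outsAt_lt (q : A.Q) (v₀ : A.C → ℕ) (u : ℕ → β) (N : ℕ) :
    ∃ B, ∀ n < N, ∀ p ∈ A.outsAt q v₀ u n, p.2 ≤ B := by
  refine ⟨∑ n ∈ Finset.range N, ((A.outsAt q v₀ u n).map Prod.snd).sum,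
    fun n hn p hp => ?_⟩
  calc p.2 ≤ ((A.outsAt q v₀ u n).map Prod.snd).sum :=
        List.le_sum_of_mem (List.mem_map_of_mem hp)
    _ ≤ _ := Finset.single_le_sum (f := fun n => ((A.outsAt q v₀ u n).map Prod.snd).sum)
        (fun _ _ => Nat.zero_le _) (Finset.mem_range.2 hn)

theorem boundedFrom_shift (q : A.Q) (u : ℕ → β) (N : ℕ) (c : A.C) :
    A.BoundedFrom q u c ↔ A.BoundedFrom (A.runFrom q u N) (suffixFrom u N) c := by
  rw [boundedFrom_iff_boundedAt, boundedFrom_iff_boundedAt,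
    boundedAt_iff A (A.runFrom q u N) (fun _ => 0) (A.valsAt q (fun _ => 0) u N)]
  constructor
  · rintro ⟨B, hB⟩
    exact ⟨B, fun k p hp => hB (N + k) p (by rwa [outsAt_add])⟩
  · rintro ⟨B, hB⟩
    obtain ⟨B₀, hB₀⟩ := A.exists_bound_outsAt_lt q (fun _ => 0) u N
    refine ⟨max B B₀, fun n p hp hpc => ?_⟩
    rcases Nat.lt_or_ge n N with hn | hn
    · exact le_max_of_le_right (hB₀ n hn p hp)
    · obtain ⟨k, rfl⟩ := Nat.exists_eq_add_of_le hn
      rw [outsAt_add] at hp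
      exact le_max_of_le_left (hB k p hp hpc)

theorem acceptsFrom_shift (q : A.Q) (u : ℕ → β) (N : ℕ) :
    A.AcceptsFrom q u ↔ A.AcceptsFrom (A.runFrom q u N) (suffixFrom u N) := by
  unfold AcceptsFrom
  rw [funext fun c => propext (A.boundedFrom_shift q u N c)]

end MaxAutomaton

namespace MaxAutomaton

variable {α β : Type}

def comap (f : β → α) (A : MaxAutomaton α) (q₀ : A.Q) : MaxAutomaton β where
  Q := A.Q
  C := A.C
  init := q₀
  δ q b := A.δ q (f b)
  acc := A.acc

variable (f : β → α) (A : MaxAutomaton α) (q₀ : A.Q)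

theorem comap_runFrom (q : A.Q) (u : ℕ → β) (n : ℕ) :
    (A.comap f q₀).runFrom q u n = A.runFrom q (f ∘ u) n := by
  induction n with
  | zero => rfl
  | succ n ih => simp only [runFrom, ih]; rfl

theorem comap_valsFrom (q : A.Q) (u : ℕ → β) (n : ℕ) :
    (A.comap f q₀).valsFrom q u n = A.valsFrom q (f ∘ u) n := by
  induction n with
  | zero => rfl
  | succ n ih => simp only [valsFrom, ih, comap_runFrom]; rfl

theorem comap_acceptsFrom (q : A.Q) (u : ℕ → β) :
    (A.comap f q₀).AcceptsFrom q u ↔ A.AcceptsFrom q (f ∘ u) := by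
  have houts (n : ℕ) : (A.comap f q₀).outsFrom q u n = A.outsFrom q (f ∘ u) n := by
    simp only [outsFrom, comap_valsFrom, comap_runFrom]; rfl
  have hbounded : (A.comap f q₀).BoundedFrom q u = A.BoundedFrom q (f ∘ u) :=
    funext fun c => propext <| by simp only [BoundedFrom, houts]; rfl
  exact iff_of_eq (congrArg (BC.eval · A.acc) hbounded)

end MaxAutomaton

theorem BC.eval_foldr_an_atom {σ : Type} (f : σ → Prop) (l : List σ) :
    (l.foldr (fun a φ => .an (.atom a) φ) BC.tt).eval f ↔ ∀ a ∈ l, f a := by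
  induction l with
  | nil => simp [BC.eval]
  | cons a l ih => simp [BC.eval, ih]

namespace GOp

variable {C α : Type}

def target : GOp C α → Option C
  | .inc c | .reset c | .maxOp c _ => some c
  | .output _ | .goutput _ _ => none

theorem wf_of_isSome_target {op : GOp C α} (h : op.target.isSome) : op.WF := by
  cases op <;> simp_all [target, WF]

end GOp

section GuardedPrograms

variable {C α : Type} [DecidableEq C] (s : ℕ → α)

theorem applyGOps_append (l₁ l₂ : List (GOp C α)) (v : C → ℕ) :
    applyGOps s (l₁ ++ l₂) v =
      ((applyGOps s l₂ (applyGOps s l₁ v).1).1,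
        (applyGOps s l₁ v).2 ++ (applyGOps s l₂ (applyGOps s l₁ v).1).2) := by
  induction l₁ generalizing v with
  | nil => simp [applyGOps]
  | cons op l₁ ih => simp [applyGOps, ih]

theorem applyGOps_apply_of_target_ne {l : List (GOp C α)} {c : C}
    (h : ∀ op ∈ l, op.target ≠ some c) (v : C → ℕ) : (applyGOps s l v).1 c = v c := by
  induction l generalizing v with
  | nil => rfl
  | cons op l ih =>
    rw [applyGOps, ih (fun op hop => h op (List.mem_cons_of_mem _ hop))]
    have hop : op.target ≠ some c := h op List.mem_cons_self
    cases op with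
    | inc d | reset d | maxOp d _ =>
      exact Function.update_of_ne (fun hcd => hop (by rw [hcd]; rfl)) _ _
    | output _ | goutput _ _ => rfl

theorem applyGOps_snd_eq_nil {l : List (GOp C α)} (h : ∀ op ∈ l, op.target.isSome)
    (v : C → ℕ) : (applyGOps s l v).2 = [] := by
  induction l generalizing v with
  | nil => rfl
  | cons op l ih =>
    rw [applyGOps, ih (fun op hop => h op (List.mem_cons_of_mem _ hop))]
    have hop := h op List.mem_cons_self
    cases op <;> simp_all [applyGOp, GOp.target]

theorem applyGOps_flatMap_apply {ι : Type} (B : ι → List (GOp C α)) (P : (C → ℕ) → Prop)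
    (hP : ∀ i v, P v → P (applyGOps s (B i) v).1) {r : ι} {c : C} {x : ℕ}
    (hr : ∀ v, P v → (applyGOps s (B r) v).1 c = x)
    (hc : ∀ i ≠ r, ∀ op ∈ B i, op.target ≠ some c) {l : List ι} {v : C → ℕ}
    (hv : P v) (hrl : r ∈ l) : (applyGOps s (l.flatMap B) v).1 c = x := by
  induction l generalizing v with
  | nil => simp at hrl
  | cons i l ih =>
    rw [List.flatMap_cons, applyGOps_append]
    by_cases hl : r ∈ l
    · exact ih (hP i v hv) hl
    · obtain rfl : r = i := by simpa [hl] using hrl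
      rw [applyGOps_apply_of_target_ne s _ _, hr v hv]
      simp only [List.mem_flatMap]
      rintro op ⟨j, hj, hop⟩
      exact hc j (fun h => hl (h ▸ hj)) op hop

theorem applyGOps_map_goutput {ι : Type} (G : ι → Set (ℕ → α)) (c : ι → C) (l : List ι)
    (v : C → ℕ) :
    (applyGOps s (l.map fun i => .goutput (G i) (c i)) v).1 = v ∧
      ∀ p, p ∈ (applyGOps s (l.map fun i => .goutput (G i) (c i)) v).2 ↔
        ∃ i ∈ l, s ∈ G i ∧ p = (c i, v (c i)) := by
  induction l with
  | nil => simp [applyGOps]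
  | cons i l ih =>
    refine ⟨ih.1, fun p => ?_⟩
    by_cases hs : s ∈ G i <;> simp [applyGOps, applyGOp, hs, ih.2, eq_comm]

end GuardedPrograms

theorem foldl_max_eq_max_sup {ι : Type} [DecidableEq ι] (f : ι → ℕ) (l : List ι) (m : ℕ) :
    l.foldl (fun m i => max m (f i)) m = max m (l.toFinset.sup f) := by
  induction l generalizing m with
  | nil => simp
  | cons i l ih => simp [ih, max_assoc]

section Counters

variable {Q α : Type}

/-- In the construction, `cur q` holds the largest size of a set `X` of positions read so far
such that `A` is in state `q` after reading the prefix of `w[X]`; `nxt q` buffers the next value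
of `cur q`, and `none` is a scratch counter. -/
def cur (q : Q) : Option (Q × Bool) := some (q, false)

def nxt (q : Q) : Option (Q × Bool) := some (q, true)

/-- `nxt q := max (nxt q) (cur q' + b)` for the edge `e = (q', b)`. -/
def edgeOps (q : Q) (e : Q × Bool) : List (GOp (Option (Q × Bool)) α) :=
  if e.2 then [.reset none, .maxOp none (cur e.1), .inc none, .maxOp (nxt q) none]
  else [.maxOp (nxt q) (cur e.1)]

def commitOps (q : Q) : List (GOp (Option (Q × Bool)) α) :=
  [.reset (cur q), .maxOp (cur q) (nxt q)]

theorem target_of_mem_edgeOps {q : Q} {e : Q × Bool} {op : GOp (Option (Q × Bool)) α}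
    (h : op ∈ edgeOps q e) : op.target = some (nxt q) ∨ op.target = some none := by
  unfold edgeOps at h
  split at h <;> simp only [List.mem_cons, List.not_mem_nil, or_false] at h <;>
    obtain rfl | rfl | rfl | rfl := h <;> simp [GOp.target]

theorem target_of_mem_commitOps {q : Q} {op : GOp (Option (Q × Bool)) α}
    (h : op ∈ commitOps q) : op.target = some (cur q) := by
  simp only [commitOps, List.mem_cons, List.not_mem_nil, or_false] at h
  rcases h with rfl | rfl <;> rfl

variable [DecidableEq Q] (s : ℕ → α)

theorem applyGOps_flatMap_edgeOps_nxt (q : Q) (es : List (Q × Bool))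
    (v : Option (Q × Bool) → ℕ) :
    (applyGOps s (es.flatMap (edgeOps q)) v).1 (nxt q) =
      es.foldl (fun m e => max m (v (cur e.1) + e.2.toNat)) (v (nxt q)) := by
  induction es generalizing v with
  | nil => rfl
  | cons e es ih =>
    rw [List.flatMap_cons, applyGOps_append, ih, List.foldl_cons]
    have hcur (r : Q) : (applyGOps s (edgeOps q e) v).1 (cur r) = v (cur r) :=
      applyGOps_apply_of_target_ne s (fun op hop => by
        rcases target_of_mem_edgeOps hop with h | h <;> simp [h, cur, nxt]) v
    have hnxt : (applyGOps s (edgeOps q e) v).1 (nxt q) =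
        max (v (nxt q)) (v (cur e.1) + e.2.toNat) := by
      obtain ⟨q', _ | _⟩ := e <;> simp [edgeOps, applyGOps, applyGOp, cur, nxt]
    simp only [hcur, hnxt]

end Counters

section Construction

variable {α : Type} (A : MaxAutomaton (α × Bool))

def guard (q : A.Q) : Set (ℕ → α) :=
  (A.comap (·, false) q).Lang

theorem mem_guard {q : A.Q} {u : ℕ → α} :
    u ∈ guard A q ↔ A.AcceptsFrom q fun n => (u n, false) :=
  MaxAutomaton.comap_acceptsFrom _ A q q u

variable [DecidableEq A.Q]

def inEdges (R : Finset A.Q) (a : α) (q : A.Q) : Finset (A.Q × Bool) :=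
  {e ∈ R ×ˢ Finset.univ | (A.δ e.1 (a, e.2)).1 = q}

def nextStates (R : Finset A.Q) (a : α) : Finset A.Q :=
  {q | (inEdges A R a q).Nonempty}

noncomputable def collectOps (R : Finset A.Q) (a : α) (q : A.Q) :
    List (GOp (Option (A.Q × Bool)) α) :=
  .reset (nxt q) :: (inEdges A R a q).toList.flatMap (edgeOps q)

noncomputable def stepOps (R : Finset A.Q) (a : α) : List (GOp (Option (A.Q × Bool)) α) :=
  Finset.univ.toList.flatMap (collectOps A R a) ++ Finset.univ.toList.flatMap commitOps ++
    (nextStates A R a).toList.map fun q => .goutput (guard A q) (cur q)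

noncomputable abbrev ulAutomaton : GuardedMaxAutomaton α where
  Q := Finset A.Q
  C := Option (A.Q × Bool)
  init := {A.init}
  δ R a := (nextStates A R a, stepOps A R a)
  acc := .nt ((Finset.univ.toList.map cur).foldr (fun c φ => .an (.atom c) φ) .tt)

theorem mem_inEdges {R : Finset A.Q} {a : α} {q : A.Q} {e : A.Q × Bool} :
    e ∈ inEdges A R a q ↔ e.1 ∈ R ∧ (A.δ e.1 (a, e.2)).1 = q := by
  simp [inEdges]

theorem mem_nextStates {R : Finset A.Q} {a : α} {q : A.Q} :
    q ∈ nextStates A R a ↔ (inEdges A R a q).Nonempty := by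
  simp [nextStates]

theorem target_of_mem_collectOps {R : Finset A.Q} {a : α} {q : A.Q}
    {op : GOp (Option (A.Q × Bool)) α} (h : op ∈ collectOps A R a q) :
    op.target = some (nxt q) ∨ op.target = some none := by
  rcases List.mem_cons.1 h with rfl | h
  · exact Or.inl rfl
  · obtain ⟨e, -, he⟩ := List.mem_flatMap.1 h
    exact target_of_mem_edgeOps he

variable (s : ℕ → α)

theorem applyGOps_collectOps_nxt (R : Finset A.Q) (a : α) (q : A.Q)
    (v : Option (A.Q × Bool) → ℕ) :
    (applyGOps s (collectOps A R a q) v).1 (nxt q) =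
      (inEdges A R a q).sup fun e => v (cur e.1) + e.2.toNat := by
  rw [collectOps, applyGOps]
  simp only
  rw [applyGOps_flatMap_edgeOps_nxt, foldl_max_eq_max_sup, Finset.toList_toFinset]
  simp [applyGOp, cur, nxt]

end Construction

section StepSemantics

variable {α : Type} (A : MaxAutomaton (α × Bool)) [DecidableEq A.Q] (s : ℕ → α)
  (R : Finset A.Q) (a : α) (v : Option (A.Q × Bool) → ℕ)

theorem target_ne_cur_of_mem_collectOps {q r : A.Q} {op : GOp (Option (A.Q × Bool)) α}
    (h : op ∈ collectOps A R a q) : op.target ≠ some (cur r) := by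
  rcases target_of_mem_collectOps A h with h | h <;> simp [h, cur, nxt]

theorem isSome_target_of_mem_collect_commit {op : GOp (Option (A.Q × Bool)) α}
    (hop : op ∈ Finset.univ.toList.flatMap (collectOps A R a) ++
      Finset.univ.toList.flatMap commitOps) : op.target.isSome := by
  simp only [List.mem_append, List.mem_flatMap] at hop
  rcases hop with ⟨q, -, hop⟩ | ⟨q, -, hop⟩
  · rcases target_of_mem_collectOps A hop with h | h <;> simp [h]
  · simp [target_of_mem_commitOps hop]

theorem applyGOps_collect_commit_cur (q : A.Q) :
    (applyGOps s (Finset.univ.toList.flatMap (collectOps A R a) ++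
        Finset.univ.toList.flatMap commitOps) v).1 (cur q) =
      (inEdges A R a q).sup fun e => v (cur e.1) + e.2.toNat := by
  have hmem (r : A.Q) : r ∈ Finset.univ.toList := Finset.mem_toList.2 (Finset.mem_univ r)
  set v₁ := (applyGOps s (Finset.univ.toList.flatMap (collectOps A R a)) v).1
  have hcollect : v₁ (nxt q) = (inEdges A R a q).sup fun e => v (cur e.1) + e.2.toNat := by
    refine applyGOps_flatMap_apply s (collectOps A R a) (fun v' => ∀ r, v' (cur r) = v (cur r))
      (fun i v' hv' r => ?_) (fun v' hv' => ?_) (fun i hi op hop => ?_) (fun r => rfl) (hmem q)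
    · rw [applyGOps_apply_of_target_ne s
        (fun _ hop => target_ne_cur_of_mem_collectOps A R a hop), hv']
    · simp only [applyGOps_collectOps_nxt, hv']
    · rcases target_of_mem_collectOps A hop with h | h <;> simp [h, nxt, hi]
  rw [applyGOps_append, ← hcollect]
  refine applyGOps_flatMap_apply s commitOps (fun v' => ∀ r, v' (nxt r) = v₁ (nxt r))
    (fun i v' hv' r => ?_) (fun v' hv' => ?_) (fun i hi op hop => ?_) (fun r => rfl) (hmem q)
  · rw [applyGOps_apply_of_target_ne s
      (fun _ hop => by simp [target_of_mem_commitOps hop, cur, nxt]), hv']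
  · simpa [commitOps, applyGOps, applyGOp, cur, nxt] using hv' q
  · simp [target_of_mem_commitOps hop, cur, hi]

theorem applyGOps_stepOps :
    (∀ q, (applyGOps s (stepOps A R a) v).1 (cur q) =
      (inEdges A R a q).sup fun e => v (cur e.1) + e.2.toNat) ∧
    ∀ p, p ∈ (applyGOps s (stepOps A R a) v).2 ↔
      ∃ q ∈ nextStates A R a, s ∈ guard A q ∧
        p = (cur q, (applyGOps s (stepOps A R a) v).1 (cur q)) := by
  have hsilent : (applyGOps s (Finset.univ.toList.flatMap (collectOps A R a) ++
      Finset.univ.toList.flatMap commitOps) v).2 = [] :=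
    applyGOps_snd_eq_nil s (fun _ => isSome_target_of_mem_collect_commit A R a) v
  obtain ⟨hvals, houts⟩ := applyGOps_map_goutput s (guard A) cur (nextStates A R a).toList
    (applyGOps s (Finset.univ.toList.flatMap (collectOps A R a) ++
      Finset.univ.toList.flatMap commitOps) v).1
  rw [stepOps, applyGOps_append, hvals, hsilent, List.nil_append]
  exact ⟨applyGOps_collect_commit_cur A s R a v, by simpa using houts⟩

end StepSemantics

theorem runFrom_withSet_succ {α : Type} (A : MaxAutomaton (α × Bool)) (q : A.Q) (w : ℕ → α)
    (X : Finset ℕ) (n : ℕ) :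
    A.runFrom q (withSet w X) (n + 1) =
      (A.δ (A.runFrom q (withSet w (X.erase n)) n) (w n, decide (n ∈ X))).1 := by
  rw [MaxAutomaton.runFrom, A.runFrom_congr q (u' := withSet w (X.erase n))
    fun k hk => by simp [withSet, hk.ne]]
  rfl

theorem card_eq_card_erase_add_toNat (X : Finset ℕ) (n : ℕ) :
    X.card = (X.erase n).card + (decide (n ∈ X)).toNat := by
  by_cases hn : n ∈ X
  · rw [decide_eq_true hn, Bool.toNat_true, Finset.card_erase_add_one hn]
  · simp [hn, Finset.erase_eq_of_notMem]

theorem accepts_withSet_iff {α : Type} (A : MaxAutomaton (α × Bool)) (w : ℕ → α)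
    {X : Finset ℕ} {N : ℕ} (hX : ∀ x ∈ X, x < N) :
    A.Accepts (withSet w X) ↔
      suffixFrom w N ∈ guard A (A.runFrom A.init (withSet w X) N) := by
  have hsuffix : suffixFrom (withSet w X) N = fun k => (suffixFrom w N k, false) := by
    funext k
    simpa [suffixFrom, withSet] using fun h => (hX _ h).not_ge (N.le_add_right k)
  rw [mem_guard, MaxAutomaton.Accepts, A.acceptsFrom_shift _ _ N, hsuffix]

section Correctness

variable {α : Type} (A : MaxAutomaton (α × Bool)) [DecidableEq A.Q] (w : ℕ → α)

theorem ulAutomaton_run_succ (n : ℕ) :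
    (ulAutomaton A).run w (n + 1) = nextStates A ((ulAutomaton A).run w n) (w n) := rfl

theorem ulAutomaton_vals_succ_cur (n : ℕ) (q : A.Q) :
    (ulAutomaton A).vals w (n + 1) (cur q) =
      (inEdges A ((ulAutomaton A).run w n) (w n) q).sup
        fun e => (ulAutomaton A).vals w n (cur e.1) + e.2.toNat :=
  (applyGOps_stepOps A _ _ _ _).1 q

theorem mem_ulAutomaton_outs (n : ℕ) (p : Option (A.Q × Bool) × ℕ) :
    p ∈ (ulAutomaton A).outs w n ↔ ∃ q ∈ (ulAutomaton A).run w (n + 1),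
      suffixFrom w (n + 1) ∈ guard A q ∧ p = (cur q, (ulAutomaton A).vals w (n + 1) (cur q)) :=
  (applyGOps_stepOps A _ _ _ _).2 p

theorem exists_card_eq_vals_of_mem_run {n : ℕ} {q : A.Q} (hq : q ∈ (ulAutomaton A).run w n) :
    ∃ X : Finset ℕ, (∀ x ∈ X, x < n) ∧ X.card = (ulAutomaton A).vals w n (cur q) ∧
      A.runFrom A.init (withSet w X) n = q := by
  induction n generalizing q with
  | zero =>
    obtain rfl : q = A.init := Finset.mem_singleton.1 hq
    exact ⟨∅, by simp, rfl, rfl⟩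
  | succ n ih =>
    rw [ulAutomaton_run_succ, mem_nextStates] at hq
    obtain ⟨⟨q', b⟩, he, hsup⟩ := Finset.exists_mem_eq_sup _ hq
      fun e => (ulAutomaton A).vals w n (cur e.1) + e.2.toNat
    obtain ⟨hq', hδ⟩ := (mem_inEdges A).1 he
    obtain ⟨X, hXn, hXcard, hXrun⟩ := ih hq'
    have hnX : n ∉ X := fun h => lt_irrefl n (hXn n h)
    set Y := if b then insert n X else X
    have hYerase : Y.erase n = X := by cases b <;> simp [Y, hnX, Finset.erase_eq_of_notMem]
    have hnY : decide (n ∈ Y) = b := by cases b <;> simp [Y, hnX]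
    refine ⟨Y, fun y hy => ?_, ?_, ?_⟩
    · have : y = n ∨ y ∈ X := by cases b <;> simp [Y] at hy <;> tauto
      rcases this with rfl | hy
      · exact y.lt_succ_self
      · exact (hXn y hy).trans n.lt_succ_self
    · rw [ulAutomaton_vals_succ_cur, hsup, card_eq_card_erase_add_toNat Y n, hYerase, hnY,
        hXcard]
    · rw [runFrom_withSet_succ, hYerase, hnY, hXrun, hδ]

theorem mem_run_and_card_le_vals {n : ℕ} {X : Finset ℕ} (hX : ∀ x ∈ X, x < n) :
    A.runFrom A.init (withSet w X) n ∈ (ulAutomaton A).run w n ∧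
      X.card ≤ (ulAutomaton A).vals w n (cur (A.runFrom A.init (withSet w X) n)) := by
  induction n generalizing X with
  | zero =>
    obtain rfl : X = ∅ := Finset.eq_empty_of_forall_notMem fun x hx => (hX x hx).not_ge x.zero_le
    exact ⟨Finset.mem_singleton_self _, le_of_eq rfl⟩
  | succ n ih =>
    obtain ⟨hq', hcard⟩ := ih (X := X.erase n) fun x hx =>
      lt_of_le_of_ne (Nat.lt_succ_iff.1 (hX x (Finset.mem_of_mem_erase hx)))
        (Finset.ne_of_mem_erase hx)
    have he : (A.runFrom A.init (withSet w (X.erase n)) n, decide (n ∈ X)) ∈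
        inEdges A ((ulAutomaton A).run w n) (w n) (A.runFrom A.init (withSet w X) (n + 1)) :=
      (mem_inEdges A).2 ⟨hq', (runFrom_withSet_succ A _ w X n).symm⟩
    refine ⟨(mem_nextStates A).2 ⟨_, he⟩, ?_⟩
    rw [ulAutomaton_vals_succ_cur, card_eq_card_erase_add_toNat X n]
    exact (Nat.add_le_add_right hcard _).trans
      (Finset.le_sup (f := fun e => (ulAutomaton A).vals w n (cur e.1) + e.2.toNat) he)

theorem ulAutomaton_accepts_iff :
    (ulAutomaton A).Accepts w ↔ ∃ q, ¬ (ulAutomaton A).Bounded w (cur q) := by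
  rw [GuardedMaxAutomaton.Accepts, BC.eval, BC.eval_foldr_an_atom]
  simp

theorem mem_UL_of_accepts (h : (ulAutomaton A).Accepts w) : w ∈ UL A.Lang := by
  obtain ⟨q, hq⟩ := (ulAutomaton_accepts_iff A w).1 h
  have hunbounded : ∀ N, ∃ n k, (cur q, k) ∈ (ulAutomaton A).outs w n ∧ N < k := by
    simpa [GuardedMaxAutomaton.Bounded] using hq
  intro N
  obtain ⟨n, k, hk, hNk⟩ := hunbounded N
  obtain ⟨q', hq', hguard, hqk⟩ := (mem_ulAutomaton_outs A w n _).1 hk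
  obtain ⟨rfl, rfl⟩ : q = q' ∧ k = (ulAutomaton A).vals w (n + 1) (cur q') := by
    simpa [cur] using hqk
  obtain ⟨X, hXn, hXcard, hXrun⟩ := exists_card_eq_vals_of_mem_run A w hq'
  exact ⟨X, by omega, (accepts_withSet_iff A w hXn).2 (hXrun ▸ hguard)⟩

theorem accepts_of_mem_UL (h : w ∈ UL A.Lang) : (ulAutomaton A).Accepts w := by
  rw [ulAutomaton_accepts_iff]
  by_contra! hbounded
  choose B hB using hbounded
  obtain ⟨X, hXcard, hXacc⟩ := h (Finset.univ.sup B + 1)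
  have hX : ∀ x ∈ X, x < X.sup id + 1 := fun x hx =>
    Nat.lt_succ_of_le (Finset.le_sup (f := id) hx)
  obtain ⟨hq, hcard⟩ := mem_run_and_card_le_vals A w hX
  set q := A.runFrom A.init (withSet w X) (X.sup id + 1)
  have hout : (cur q, (ulAutomaton A).vals w (X.sup id + 1) (cur q)) ∈
      (ulAutomaton A).outs w (X.sup id) :=
    (mem_ulAutomaton_outs A w _ _).2 ⟨q, hq, (accepts_withSet_iff A w hX).1 hXacc, rfl⟩
  have hBq := Finset.le_sup (f := B) (Finset.mem_univ q)
  have := hB q _ _ hout rfl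
  omega

theorem ulAutomaton_lang : (ulAutomaton A).Lang = UL A.Lang :=
  Set.ext fun w => ⟨mem_UL_of_accepts A w, accepts_of_mem_UL A w⟩

theorem ulAutomaton_wf : (ulAutomaton A).WF := by
  intro R a op hop
  rcases List.mem_append.1 hop with hop | hop
  · exact GOp.wf_of_isSome_target (isSome_target_of_mem_collect_commit A R a hop)
  · obtain ⟨q, -, rfl⟩ := List.mem_map.1 hop
    exact ⟨_, rfl⟩

end Correctness

theorem UL_guardedMaxAutomaton_general {α : Type}
    (L : Set (ℕ → α × Bool))
    (h : ∃ A : MaxAutomaton (α × Bool), A.Lang = L) :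
    ∃ B : GuardedMaxAutomaton α, B.WF ∧ B.Lang = UL L := by
  classical
  obtain ⟨A, rfl⟩ := h
  exact ⟨ulAutomaton A, ulAutomaton_wf A, ulAutomaton_lang A⟩

/-- If `L` is recognized by a deterministic max-automaton,
then `UL` is recognized by a deterministic guarded max-automaton. -/
theorem UL_guardedMaxAutomaton {α : Type} [Fintype α]
    (L : Set (ℕ → α × Bool))
    (h : ∃ A : MaxAutomaton (α × Bool), A.Lang = L) :
    ∃ B : GuardedMaxAutomaton α, B.WF ∧ B.Lang = UL L :=
  UL_guardedMaxAutomaton_general L h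

end MaxReg
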